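/- Let N ≥ 2 and K ≥ 1, and let (w, P) be a configuration with confidence e. If e = 1/N, then for every k with w k > 0 and every i ∈ Fin N one has P k i = 1/N, and consequently for every function f : ℝ → ℝ the f-impurity satisfies I = N·f(1/N). (Equality case e = 1/N of Theorem 2: the upper bound u(e) is attained.) -/

import Mathlib

/-! A row with sum `1` has maximum at least `1/N`, with equality only for the uniform row; so a
weighted average of row maxima can equal `1/N` only if every row of positive weight is uniform,
and then each such row contributes `N f(1/N)` to the impurity. -/

open Finset

/-- The maximum of a real-valued vector over the finite index set `Fin N` (`N > 0`). -/
noncomputable def colMax {N : ℕ} (hN : 0 < N) (v : Fin N → ℝ) : ℝ :=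
  Finset.univ.sup' (Finset.univ_nonempty_iff.mpr ⟨⟨0, hN⟩⟩) v

section colMax

variable {N : ℕ} (hN : 0 < N) (v : Fin N → ℝ)

lemma le_colMax (i : Fin N) : v i ≤ colMax hN v :=
  le_sup' v (mem_univ i)

lemma sum_le_mul_colMax : ∑ i, v i ≤ N * colMax hN v := by
  simpa using sum_le_sum fun i (_ : i ∈ univ) => le_colMax hN v i

lemma one_div_le_colMax (hv : ∑ i, v i = 1) : 1 / (N : ℝ) ≤ colMax hN v := by
  rw [div_le_iff₀ (by positivity), mul_comm]
  linarith [sum_le_mul_colMax hN v]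

lemma eq_colMax_of_sum_eq (hv : ∑ i, v i = N * colMax hN v) (i : Fin N) :
    v i = colMax hN v :=
  (sum_eq_sum_iff_of_le fun j _ => le_colMax hN v j).1 (by simpa using hv) i (mem_univ i)

end colMax

lemma eq_of_weighted_sum_eq_of_le {ι : Type*} [Fintype ι] {w m : ι → ℝ} {c : ℝ}
    (hw : ∀ k, 0 ≤ w k) (hws : ∑ k, w k = 1) (hm : ∀ k, c ≤ m k)
    (h : ∑ k, w k * m k = c) {k : ι} (hk : 0 < w k) : m k = c := by
  have hsum : ∑ k, w k * c = ∑ k, w k * m k := by rw [← sum_mul, hws, one_mul, h]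
  have hterm := (sum_eq_sum_iff_of_le fun j _ => mul_le_mul_of_nonneg_left (hm j) (hw j)).1
    hsum k (mem_univ k)
  exact (mul_left_cancel₀ hk.ne' hterm).symm

/-- Equality case `e = 1/N` of Theorem 2: if the confidence equals `1/N`, then every
cell with positive weight is uniform, and the `f`-impurity equals `N * f(1/N)` for
every `f`. -/
theorem confidence_eq_inv_N (N K : ℕ) (hN : 2 ≤ N)
    (w : Fin K → ℝ) (hw : ∀ k, 0 ≤ w k) (hws : ∑ k, w k = 1)
    (P : Fin K → Fin N → ℝ) (hPs : ∀ k, ∑ i, P k i = 1)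
    (e : ℝ) (he : e = ∑ k, w k * colMax (by omega) (P k))
    (heq : e = 1 / (N : ℝ)) :
    (∀ k, 0 < w k → ∀ i, P k i = 1 / (N : ℝ)) ∧
      (∀ f : ℝ → ℝ, ∑ k, ∑ i, w k * f (P k i) = (N : ℝ) * f (1 / (N : ℝ))) := by
  have hN0 : 0 < N := by omega
  have uniform : ∀ k, 0 < w k → ∀ i, P k i = 1 / (N : ℝ) := by
    intro k hk i
    have hmax : colMax hN0 (P k) = 1 / N :=
      eq_of_weighted_sum_eq_of_le hw hws (fun k => one_div_le_colMax hN0 (P k) (hPs k))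
        (he ▸ heq) hk
    have hrow : ∑ i, P k i = N * colMax hN0 (P k) := by
      rw [hPs k, hmax]
      field_simp
    rw [eq_colMax_of_sum_eq hN0 (P k) hrow i, hmax]
  refine ⟨uniform, fun f => ?_⟩
  have hrow : ∀ k, ∑ i, w k * f (P k i) = w k * (N * f (1 / N)) := by
    intro k
    rcases (hw k).eq_or_lt with hk | hk
    · simp [← hk]
    · simp [uniform k hk, mul_left_comm]
  simp only [hrow, ← sum_mul, hws, one_mul]
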